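/- arXiv:2103.12141 — 2 statements merged into one kernel-verified Lean document; each statement's English description precedes it below -/
import Mathlib

section
/- (Output-ellipsoid containment theorem) Suppose z ∈ ℝ^N satisfies [z;1]ᵀPᵢ[z;1] ≥ 0 for i = 1,…,q and [z;1]ᵀP_mid[z;1] ≥ 0, and the output is w = W z̃ + b where z̃ = Sz for a matrix S. If there exist τᵢ ≥ 0, a symmetric positive definite U, and V such that Σᵢ τᵢPᵢ + P_mid + GᵀΘG ⪯ 0, where G = [[WS, b],[0, 1]] and Θ = [[U², UV],[VᵀU, VᵀV−1]], then w ∈ E(−U⁻¹V, U⁻²). -/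
/-!
Evaluate the matrix inequality at `ξ = [z; 1]`. The S-procedure multipliers contribute
nonnegative terms, so `ξᵀ Gᵀ Θ G ξ ≤ 0`. Since `G ξ = [w; 1]` and, for symmetric `U`,
`[w; 1]ᵀ Θ [w; 1] = ‖U w + V‖² - 1`, this says `‖U w + V‖ ≤ 1`, and
`U w + V = U (w + U⁻¹ V)` turns it into the ellipsoid inequality.
-/

open Matrix

namespace Matrix

variable {n : Type*} [Fintype n]

theorem dotProduct_sum_smul_mulVec {ι : Type*} [Fintype ι] {R : Type*} [CommSemiring R]
    (c : ι → R) (P : ι → Matrix n n R) (x : n → R) :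
    x ⬝ᵥ (∑ i, c i • P i) *ᵥ x = ∑ i, c i * (x ⬝ᵥ P i *ᵥ x) := by
  simp only [sum_mulVec, dotProduct_sum, smul_mulVec, dotProduct_smul, smul_eq_mul]

theorem dotProduct_mulVec_nonpos_of_posSemidef_neg {ι : Type*} [Fintype ι]
    (τ : ι → ℝ) (hτ : ∀ i, 0 ≤ τ i) (P : ι → Matrix n n ℝ) (Q M : Matrix n n ℝ) (x : n → ℝ)
    (hP : ∀ i, 0 ≤ x ⬝ᵥ P i *ᵥ x) (hQ : 0 ≤ x ⬝ᵥ Q *ᵥ x)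
    (h : (-(∑ i, τ i • P i + Q + M)).PosSemidef) :
    x ⬝ᵥ M *ᵥ x ≤ 0 := by
  have hsum : 0 ≤ x ⬝ᵥ (∑ i, τ i • P i) *ᵥ x := by
    rw [dotProduct_sum_smul_mulVec]
    exact Finset.sum_nonneg fun i _ => mul_nonneg (hτ i) (hP i)
  have hneg := h.dotProduct_mulVec_nonneg x
  simp only [star_trivial, neg_mulVec, dotProduct_neg, add_mulVec, dotProduct_add] at hneg
  linarith

theorem dotProduct_transpose_mul_mul_mulVec {m : Type*} [Fintype m] {R : Type*}
    [CommSemiring R]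
    (G : Matrix m n R) (Θ : Matrix m m R) (x : n → R) :
    x ⬝ᵥ (Gᵀ * Θ * G) *ᵥ x = (G *ᵥ x) ⬝ᵥ Θ *ᵥ (G *ᵥ x) := by
  rw [Matrix.mul_assoc, ← mulVec_mulVec, dotProduct_mulVec, vecMul_transpose, ← mulVec_mulVec]

theorem fromBlocks_mulVec_sumElim_one {m : Type*} [Fintype m] {R : Type*} [CommSemiring R]
    (A : Matrix m n R) (b : m → R) (z : n → R) :
    fromBlocks A (of fun i (_ : Unit) => b i) 0 (of fun (_ _ : Unit) => (1 : R)) *ᵥ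
        Sum.elim z (fun _ => 1) = Sum.elim (A *ᵥ z + b) (fun _ => 1) := by
  ext (i | i) <;> simp [mulVec, dotProduct]

theorem sumElim_one_dotProduct_fromBlocks_mulVec {R : Type*} [CommRing R]
    (U : Matrix n n R) (hU : U.IsSymm) (V w : n → R) :
    Sum.elim w (fun _ => 1) ⬝ᵥ
        fromBlocks (U * U) (of fun i (_ : Unit) => (U *ᵥ V) i)
          (of fun (_ : Unit) j => (U *ᵥ V) j) (of fun (_ _ : Unit) => V ⬝ᵥ V - 1) *ᵥ
            Sum.elim w (fun _ => 1) =
      (U *ᵥ w + V) ⬝ᵥ (U *ᵥ w + V) - 1 := by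
  have hUw : ∀ v, w ⬝ᵥ U *ᵥ v = U *ᵥ w ⬝ᵥ v := fun v => by
    rw [dotProduct_mulVec, ← mulVec_transpose, hU.eq]
  have hblock : fromBlocks (U * U) (of fun i (_ : Unit) => (U *ᵥ V) i)
      (of fun (_ : Unit) j => (U *ᵥ V) j) (of fun (_ _ : Unit) => V ⬝ᵥ V - 1) *ᵥ
        Sum.elim w (fun _ => 1) =
      Sum.elim ((U * U) *ᵥ w + U *ᵥ V) (fun _ => (U *ᵥ V) ⬝ᵥ w + (V ⬝ᵥ V - 1)) := by
    ext (i | i) <;> simp [mulVec, dotProduct]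
  have hunit : ∀ c : R, (fun _ : Unit => (1 : R)) ⬝ᵥ (fun _ => c) = c := fun c => by
    simp [dotProduct]
  rw [hblock, sumElim_dotProduct_sumElim, hunit, dotProduct_comm (U *ᵥ V), ← mulVec_mulVec]
  simp only [dotProduct_add, add_dotProduct, hUw, dotProduct_comm V (U *ᵥ w)]
  ring

theorem dotProduct_mul_self_mulVec_add_inv_mulVec [DecidableEq n] {R : Type*} [CommRing R]
    (U : Matrix n n R) (hU : U.IsSymm) (hdet : IsUnit U.det) (V w : n → R) :
    (w + U⁻¹ *ᵥ V) ⬝ᵥ (U * U) *ᵥ (w + U⁻¹ *ᵥ V) = (U *ᵥ w + V) ⬝ᵥ (U *ᵥ w + V) := by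
  have hUinv : U *ᵥ (w + U⁻¹ *ᵥ V) = U *ᵥ w + V := by
    rw [mulVec_add, mulVec_mulVec, mul_nonsing_inv U hdet, one_mulVec]
  rw [← mulVec_mulVec, dotProduct_mulVec, ← mulVec_transpose, hU.eq, hUinv]

end Matrix

theorem output_ellipsoid_containment_general
    (N q r m : ℕ) (z : Fin N → ℝ)
    (P : Fin q → Matrix (Fin N ⊕ Unit) (Fin N ⊕ Unit) ℝ)
    (Pmid : Matrix (Fin N ⊕ Unit) (Fin N ⊕ Unit) ℝ)
    (hP : ∀ i, 0 ≤ (Sum.elim z fun _ => (1 : ℝ)) ⬝ᵥ (P i).mulVec (Sum.elim z fun _ => (1 : ℝ)))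
    (hPmid : 0 ≤ (Sum.elim z fun _ => (1 : ℝ)) ⬝ᵥ Pmid.mulVec (Sum.elim z fun _ => (1 : ℝ)))
    (W : Matrix (Fin m) (Fin r) ℝ) (S : Matrix (Fin r) (Fin N) ℝ) (b : Fin m → ℝ)
    (w : Fin m → ℝ) (hw : w = W.mulVec (S.mulVec z) + b)
    (τ : Fin q → ℝ) (hτ : ∀ i, 0 ≤ τ i)
    (U : Matrix (Fin m) (Fin m) ℝ) (hU : U.PosDef)
    (V : Fin m → ℝ)
    (G : Matrix (Fin m ⊕ Unit) (Fin N ⊕ Unit) ℝ)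
    (hG : G = Matrix.fromBlocks (W * S)
        (Matrix.of fun i (_ : Unit) => b i)
        (0 : Matrix Unit (Fin N) ℝ)
        (Matrix.of fun (_ : Unit) (_ : Unit) => (1 : ℝ)))
    (Θ : Matrix (Fin m ⊕ Unit) (Fin m ⊕ Unit) ℝ)
    (hΘ : Θ = Matrix.fromBlocks (U * U)
        (Matrix.of fun i (_ : Unit) => U.mulVec V i)
        (Matrix.of fun (_ : Unit) j => U.mulVec V j)
        (Matrix.of fun (_ : Unit) (_ : Unit) => V ⬝ᵥ V - 1))
    (hNSD : (-(∑ i, τ i • P i + Pmid + Gᵀ * Θ * G)).PosSemidef) :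
    (w + U⁻¹.mulVec V) ⬝ᵥ (U * U).mulVec (w + U⁻¹.mulVec V) ≤ 1 := by
  have hUsymm : U.IsSymm := isHermitian_iff_isSymm.mp hU.isHermitian
  have hdet : IsUnit U.det := (isUnit_iff_isUnit_det U).mp hU.isUnit
  have hquad := dotProduct_mulVec_nonpos_of_posSemidef_neg τ hτ P Pmid _ _ hP hPmid hNSD
  rw [dotProduct_transpose_mul_mul_mulVec, hG, fromBlocks_mulVec_sumElim_one, ← mulVec_mulVec,
    ← hw, hΘ, sumElim_one_dotProduct_fromBlocks_mulVec U hUsymm] at hquad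
  rw [dotProduct_mul_self_mulVec_add_inv_mulVec U hUsymm hdet]
  linarith

theorem output_ellipsoid_containment
    (N q r m : ℕ) (z : Fin N → ℝ)
    (P : Fin q → Matrix (Fin N ⊕ Unit) (Fin N ⊕ Unit) ℝ)
    (Pmid : Matrix (Fin N ⊕ Unit) (Fin N ⊕ Unit) ℝ)
    (hP : ∀ i, 0 ≤ (Sum.elim z fun _ => (1 : ℝ)) ⬝ᵥ (P i).mulVec (Sum.elim z fun _ => (1 : ℝ)))
    (hPmid : 0 ≤ (Sum.elim z fun _ => (1 : ℝ)) ⬝ᵥ Pmid.mulVec (Sum.elim z fun _ => (1 : ℝ)))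
    (W : Matrix (Fin m) (Fin r) ℝ) (S : Matrix (Fin r) (Fin N) ℝ) (b : Fin m → ℝ)
    (w : Fin m → ℝ) (hw : w = W.mulVec (S.mulVec z) + b)
    (τ : Fin q → ℝ) (hτ : ∀ i, 0 ≤ τ i)
    (U : Matrix (Fin m) (Fin m) ℝ) (hU : U.PosDef) (hUsymm : U.IsSymm)
    (V : Fin m → ℝ)
    (G : Matrix (Fin m ⊕ Unit) (Fin N ⊕ Unit) ℝ)
    (hG : G = Matrix.fromBlocks (W * S)
        (Matrix.of fun i (_ : Unit) => b i)
        (0 : Matrix Unit (Fin N) ℝ)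
        (Matrix.of fun (_ : Unit) (_ : Unit) => (1 : ℝ)))
    (Θ : Matrix (Fin m ⊕ Unit) (Fin m ⊕ Unit) ℝ)
    (hΘ : Θ = Matrix.fromBlocks (U * U)
        (Matrix.of fun i (_ : Unit) => U.mulVec V i)
        (Matrix.of fun (_ : Unit) j => U.mulVec V j)
        (Matrix.of fun (_ : Unit) (_ : Unit) => V ⬝ᵥ V - 1))
    (hNSD : (-(∑ i, τ i • P i + Pmid + Gᵀ * Θ * G)).PosSemidef) :
    (w + U⁻¹.mulVec V) ⬝ᵥ (U * U).mulVec (w + U⁻¹.mulVec V) ≤ 1 :=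
  output_ellipsoid_containment_general N q r m z P Pmid hP hPmid W S b w hw τ hτ U hU V G hG Θ hΘ
    hNSD
end

section
/- Under the detector of Definition 1, if the noise realizations v_{k−N},…,v_k, v_{k+1} all lie within their confidence ellipsoids E(0, Σ̄), and the prediction bound E(μ̂, Σ̂) is a guaranteed outer bound (i.e., the neural network output on any inputs from the input confidence ellipsoids lies in E(μ̂, Σ̂)), and the ideal prediction equals the ideal next measurement, then no alarm is raised: y_{k+1} ∈ E(μ̂, Σ̂) ⊕ E(0, Σ̄). Consequently the false alarm probability is at most 1 − p̄^{N+2}. -/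
/-!
If every noise sample lies in its confidence ellipsoid, then each ideal input lies in the
ellipsoid around the corresponding measurement, so the bound is sound for the ideal prediction
`f y* = y*_{k+1}`; writing `y_{k+1} = y*_{k+1} + v_{k+1}` exhibits it in `E(μ̂, Σ̂) ⊕ E(0, Σ̄)`.
An alarm therefore needs some noise sample outside its ellipsoid, and by independence the
complementary event has probability at least `p̄ ^ (N + 2)`.
-/

open Matrix MeasureTheory ProbabilityTheory

namespace Matrix

variable {n : Type*} [Fintype n]

lemma neg_dotProduct_mulVec_neg {R : Type*} [Ring R] (A : Matrix n n R) (x : n → R) :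
    -x ⬝ᵥ A *ᵥ -x = x ⬝ᵥ A *ᵥ x := by
  rw [mulVec_neg, neg_dotProduct_neg]

lemma measurableSet_dotProduct_mulVec_le (A : Matrix n n ℝ) (c : ℝ) :
    MeasurableSet {x : n → ℝ | x ⬝ᵥ A *ᵥ x ≤ c} :=
  measurableSet_le
    (continuous_id.dotProduct (continuous_const.matrix_mulVec continuous_id)).measurable
    measurable_const

end Matrix

lemma ProbabilityTheory.iIndepFun.measure_compl_iInter_preimage_le
    {Ω ι : Type*} [MeasurableSpace Ω] {P : Measure Ω} [IsProbabilityMeasure P] [Fintype ι]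
    {β : ι → Type*} [∀ i, MeasurableSpace (β i)] {X : ∀ i, Ω → β i}
    (hX : iIndepFun X P) (hXm : ∀ i, Measurable (X i))
    {S : ∀ i, Set (β i)} (hS : ∀ i, MeasurableSet (S i))
    {q : ENNReal} (hq : ∀ i, q ≤ P (X i ⁻¹' S i)) :
    P (⋂ i, X i ⁻¹' S i)ᶜ ≤ 1 - q ^ Fintype.card ι := by
  rw [prob_compl_eq_one_sub (.iInter fun i => hXm i (hS i)),
    hX.meas_iInter fun i => ⟨S i, hS i, rfl⟩]
  gcongr
  simpa using Finset.pow_card_le_prod Finset.univ _ q fun i _ => hq i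

theorem detector_false_alarm_bound_general
    {Ω : Type*} [MeasurableSpace Ω] (P : Measure Ω) [IsProbabilityMeasure P]
    (p N : ℕ)
    (Sbar Shat : Matrix (Fin p) (Fin p) ℝ)
    (μhat : Fin p → ℝ)
    (ystar : Fin (N + 2) → (Fin p → ℝ))
    (v : Fin (N + 2) → Ω → (Fin p → ℝ))
    (hmeas : ∀ j, Measurable (v j))
    (hindep : iIndepFun v P)
    (pbar : ENNReal)
    (hconf : ∀ j, pbar ≤ P {ω | (v j ω) ⬝ᵥ Sbar⁻¹.mulVec (v j ω) ≤ 1})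
    (y : Fin (N + 2) → Ω → (Fin p → ℝ)) (hy : ∀ j ω, y j ω = ystar j + v j ω)
    (f : (Fin (N + 1) → (Fin p → ℝ)) → (Fin p → ℝ))
    -- soundness of the prediction bound: whenever each ideal input lies in the
    -- confidence ellipsoid around the corresponding actual measurement, the
    -- network output on the ideal inputs lies in the prediction bound
    (hsound : ∀ ω, (∀ j : Fin (N + 1),
        (ystar j.castSucc - y j.castSucc ω) ⬝ᵥ
          Sbar⁻¹.mulVec (ystar j.castSucc - y j.castSucc ω) ≤ 1) →
        ((f fun j => ystar j.castSucc) - μhat) ⬝ᵥ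
          Shat⁻¹.mulVec ((f fun j => ystar j.castSucc) - μhat) ≤ 1)
    -- accuracy: the ideal prediction equals the ideal next measurement
    (hacc : (f fun j => ystar j.castSucc) = ystar (Fin.last (N + 1))) :
    -- (1) deterministic: if all noise realizations are in their confidence
    -- ellipsoids, no alarm is raised
    (∀ ω, (∀ j : Fin (N + 2), (v j ω) ⬝ᵥ Sbar⁻¹.mulVec (v j ω) ≤ 1) →
        ∃ s1, (s1 - μhat) ⬝ᵥ Shat⁻¹.mulVec (s1 - μhat) ≤ 1 ∧
        ∃ s2, s2 ⬝ᵥ Sbar⁻¹.mulVec s2 ≤ 1 ∧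
          y (Fin.last (N + 1)) ω = s1 + s2) ∧
    -- (2) the false alarm probability is at most 1 - pbar^(N+2)
    P {ω | ¬ ∃ s1, (s1 - μhat) ⬝ᵥ Shat⁻¹.mulVec (s1 - μhat) ≤ 1 ∧
        ∃ s2, s2 ⬝ᵥ Sbar⁻¹.mulVec s2 ≤ 1 ∧
          y (Fin.last (N + 1)) ω = s1 + s2} ≤ 1 - pbar ^ (N + 2) := by
  have no_alarm : ∀ ω, (∀ j, v j ω ⬝ᵥ Sbar⁻¹ *ᵥ v j ω ≤ 1) →
      ∃ s1, (s1 - μhat) ⬝ᵥ Shat⁻¹ *ᵥ (s1 - μhat) ≤ 1 ∧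
        ∃ s2, s2 ⬝ᵥ Sbar⁻¹ *ᵥ s2 ≤ 1 ∧ y (Fin.last (N + 1)) ω = s1 + s2 := by
    intro ω hv
    have ideal_sub_measured : ∀ j : Fin (N + 1), ystar j.castSucc - y j.castSucc ω =
        -v j.castSucc ω := fun j => by rw [hy]; abel
    refine ⟨_, hsound ω fun j => ?_, _, hv (Fin.last (N + 1)), by rw [hacc, hy]⟩
    rw [ideal_sub_measured, neg_dotProduct_mulVec_neg]
    exact hv j.castSucc
  refine ⟨no_alarm, ?_⟩
  calc P {ω | ¬ ∃ s1, (s1 - μhat) ⬝ᵥ Shat⁻¹ *ᵥ (s1 - μhat) ≤ 1 ∧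
          ∃ s2, s2 ⬝ᵥ Sbar⁻¹ *ᵥ s2 ≤ 1 ∧ y (Fin.last (N + 1)) ω = s1 + s2}
      ≤ P (⋂ j, v j ⁻¹' {x | x ⬝ᵥ Sbar⁻¹ *ᵥ x ≤ 1})ᶜ :=
        measure_mono fun ω alarm inside => alarm (no_alarm ω fun j => Set.mem_iInter.mp inside j)
    _ ≤ 1 - pbar ^ (N + 2) := by
        simpa using hindep.measure_compl_iInter_preimage_le hmeas
          (fun _ => measurableSet_dotProduct_mulVec_le _ _) hconf

theorem detector_false_alarm_bound
    {Ω : Type*} [MeasurableSpace Ω] (P : Measure Ω) [IsProbabilityMeasure P]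
    (p N : ℕ)
    (Sbar Shat : Matrix (Fin p) (Fin p) ℝ) (hSbar : Sbar.PosDef) (hShat : Shat.PosDef)
    (μhat : Fin p → ℝ)
    (ystar : Fin (N + 2) → (Fin p → ℝ))
    (v : Fin (N + 2) → Ω → (Fin p → ℝ))
    (hmeas : ∀ j, Measurable (v j))
    (hindep : iIndepFun v P)
    (pbar : ENNReal) (hpbar : pbar ≤ 1)
    (hconf : ∀ j, pbar ≤ P {ω | (v j ω) ⬝ᵥ Sbar⁻¹.mulVec (v j ω) ≤ 1})
    (y : Fin (N + 2) → Ω → (Fin p → ℝ)) (hy : ∀ j ω, y j ω = ystar j + v j ω)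
    (f : (Fin (N + 1) → (Fin p → ℝ)) → (Fin p → ℝ))
    -- soundness of the prediction bound: whenever each ideal input lies in the
    -- confidence ellipsoid around the corresponding actual measurement, the
    -- network output on the ideal inputs lies in the prediction bound
    (hsound : ∀ ω, (∀ j : Fin (N + 1),
        (ystar j.castSucc - y j.castSucc ω) ⬝ᵥ
          Sbar⁻¹.mulVec (ystar j.castSucc - y j.castSucc ω) ≤ 1) →
        ((f fun j => ystar j.castSucc) - μhat) ⬝ᵥ
          Shat⁻¹.mulVec ((f fun j => ystar j.castSucc) - μhat) ≤ 1)
    -- accuracy: the ideal prediction equals the ideal next measurement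
    (hacc : (f fun j => ystar j.castSucc) = ystar (Fin.last (N + 1))) :
    -- (1) deterministic: if all noise realizations are in their confidence
    -- ellipsoids, no alarm is raised
    (∀ ω, (∀ j : Fin (N + 2), (v j ω) ⬝ᵥ Sbar⁻¹.mulVec (v j ω) ≤ 1) →
        ∃ s1, (s1 - μhat) ⬝ᵥ Shat⁻¹.mulVec (s1 - μhat) ≤ 1 ∧
        ∃ s2, s2 ⬝ᵥ Sbar⁻¹.mulVec s2 ≤ 1 ∧
          y (Fin.last (N + 1)) ω = s1 + s2) ∧
    -- (2) the false alarm probability is at most 1 - pbar^(N+2)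
    P {ω | ¬ ∃ s1, (s1 - μhat) ⬝ᵥ Shat⁻¹.mulVec (s1 - μhat) ≤ 1 ∧
        ∃ s2, s2 ⬝ᵥ Sbar⁻¹.mulVec s2 ≤ 1 ∧
          y (Fin.last (N + 1)) ω = s1 + s2} ≤ 1 - pbar ^ (N + 2) :=
  detector_false_alarm_bound_general P p N Sbar Shat μhat ystar v hmeas hindep pbar hconf y hy f
    hsound hacc
end
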